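/- arXiv:1601.00207 — 2 statements merged into one kernel-verified Lean document; each statement's English description precedes it below -/
import Mathlib

section
/- Let U = {1, u, v} where u, v are unit-magnitude complex numbers with u ≠ ±1, v ≠ ±1, u ≠ ±v, and let x = I_{u,v}(0,1). Then R(U) is a subring of ℂ if and only if x is a non-real quadratic integer, i.e., x ∉ ℝ and there exist λ, μ ∈ ℤ with x² = λ·x + μ. -/
open Complex

/-- The bracket `[x,y] = x * conj y - y * conj x`. -/
noncomputable def brkt (x y : ℂ) : ℂ := x * (starRingEnd ℂ) y - y * (starRingEnd ℂ) x

/-- `lineInt α β p q` is the intersection point `I_{α,β}(p,q)` of the line through `p`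
with direction `α` and the line through `q` with direction `β` (for unit `α ≠ ±β`),
given by the formula of Buhler et al. -/
noncomputable def lineInt (α β p q : ℂ) : ℂ :=
  brkt α p / brkt α β * β + brkt β q / brkt β α * α

/-- The sets `S n` in the inductive construction. -/
def stepSet (U : Set ℂ) : ℕ → Set ℂ
  | 0 => {0, 1}
  | n + 1 => {z | ∃ α ∈ U, ∃ β ∈ U, α ≠ β ∧ α ≠ -β ∧
      ∃ p ∈ stepSet U n, ∃ q ∈ stepSet U n, z = lineInt α β p q}

/-- `RU U = ⋃ n, S n`. -/
def RU (U : Set ℂ) : Set ℂ := ⋃ n, stepSet U n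

/-- Elementary monomials of `U`. -/
def IsElem (U : Set ℂ) (z : ℂ) : Prop :=
  ∃ α ∈ U, ∃ β ∈ U, α ≠ β ∧ α ≠ -β ∧ z = lineInt α β 0 1

/-- Monomials of `U`, defined inductively. -/
inductive IsMonomial (U : Set ℂ) : ℂ → Prop
  | elementary (α β : ℂ) (hα : α ∈ U) (hβ : β ∈ U) (h1 : α ≠ β) (h2 : α ≠ -β) :
      IsMonomial U (lineInt α β 0 1)
  | step (α β m : ℂ) (hα : α ∈ U) (hβ : β ∈ U) (h1 : α ≠ β) (h2 : α ≠ -β)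
      (hm : IsMonomial U m) : IsMonomial U (lineInt α β 0 m)

/-- `P`: the real numbers arising as length-two monomials `I_{γ,δ}(0,z)` on the real axis. -/
def projSet (U : Set ℂ) : Set ℝ :=
  {r | ∃ γ ∈ U, ∃ δ ∈ U, γ ≠ δ ∧ γ ≠ -δ ∧ ∃ z, IsElem U z ∧ (r : ℂ) = lineInt γ δ 0 z}

/-- `m` is a `ℤ[P]`-linear combination of elementary monomials of `U`. -/
def IsZPComb (U : Set ℂ) (m : ℂ) : Prop :=
  ∃ (n : ℕ) (c : Fin n → ℝ) (z : Fin n → ℂ),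
    (∀ i, c i ∈ Subring.closure (projSet U)) ∧ (∀ i, IsElem U (z i)) ∧
    m = ∑ i, (c i : ℂ) * z i

/-!
`brkt α w = 2 i Im (α * conj w)` vanishes exactly when `w ∈ ℝ α`, so `z` lies on the line through
`p` with direction `α` iff `brkt α (z - p) = 0`. Since `x = I_{u,v}(0,1)` lies on `ℝ u` and on
`1 + ℝ v`, in the affine coordinates `z = a + b x` the lines with directions `1`, `u`, `v` are
the level sets of `b`, `a` and `a + b`. Any two of these forms are unimodular, so intersecting lines
through points of `ℤ + ℤ x` lands in `ℤ + ℤ x`, and conversely these intersections already produce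
all of `ℤ + ℤ x` from `0` and `1`. Hence `R(U) = ℤ + ℤ x`, which is a ring iff `x² ∈ ℤ + ℤ x`;
`x` is never real, because `ℝ u` meets the real axis only at `0`, which is not on `1 + ℝ v`.
-/

open Submodule ComplexConjugate

section Bracket

lemma brkt_self (α : ℂ) : brkt α α = 0 := sub_self _

lemma brkt_swap (α β : ℂ) : brkt β α = -brkt α β := (neg_sub _ _).symm

lemma brkt_ne_zero_symm {α β : ℂ} (h : brkt α β ≠ 0) : brkt β α ≠ 0 := by
  rwa [brkt_swap, neg_ne_zero]

lemma brkt_zero (α : ℂ) : brkt α 0 = 0 := by simp [brkt]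

lemma brkt_add (α p q : ℂ) : brkt α (p + q) = brkt α p + brkt α q := by
  unfold brkt
  rw [map_add]
  ring

lemma brkt_sub (α p q : ℂ) : brkt α (p - q) = brkt α p - brkt α q := by
  unfold brkt
  rw [map_sub]
  ring

lemma brkt_mul_of_conj_eq {c : ℂ} (hc : conj c = c) (α w : ℂ) :
    brkt α (c * w) = c * brkt α w := by
  unfold brkt
  rw [map_mul, hc]
  ring

lemma conj_brkt (α β : ℂ) : conj (brkt α β) = brkt β α := by
  simp only [brkt, map_sub, map_mul, conj_conj]
  ring

lemma conj_brkt_div_brkt (α β γ δ : ℂ) : conj (brkt α β / brkt γ δ) = brkt α β / brkt γ δ := by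
  rw [map_div₀, conj_brkt, conj_brkt, brkt_swap α, brkt_swap γ, neg_div_neg_eq]

lemma brkt_eq_zero_of_eq_intCast_mul {α w z : ℂ} (hw : brkt α w = 0) (n : ℤ) (h : z = n * w) :
    brkt α z = 0 := by
  rw [h, brkt_mul_of_conj_eq (map_intCast _ n), hw, mul_zero]

lemma ne_of_brkt_ne_zero {α β : ℂ} (h : brkt α β ≠ 0) : α ≠ β := by
  rintro rfl
  exact h (brkt_self α)

lemma ne_neg_of_brkt_ne_zero {α β : ℂ} (h : brkt α β ≠ 0) : α ≠ -β := by
  rintro rfl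
  apply h
  simp only [brkt, map_neg]
  ring

lemma brkt_ne_zero_of_norm_eq_one {α β : ℂ} (hα : ‖α‖ = 1) (hβ : ‖β‖ = 1) (hne : α ≠ β)
    (hne' : α ≠ -β) : brkt α β ≠ 0 := by
  have hα0 : α ≠ 0 := norm_ne_zero_iff.mp (by rw [hα]; exact one_ne_zero)
  have hβ0 : β ≠ 0 := norm_ne_zero_iff.mp (by rw [hβ]; exact one_ne_zero)
  intro h
  rw [brkt, ← inv_eq_conj hα, ← inv_eq_conj hβ, sub_eq_zero] at h
  have hsq : (α - β) * (α + β) = 0 := by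
    field_simp at h
    linear_combination h
  rcases mul_eq_zero.mp hsq with h | h
  · exact hne (sub_eq_zero.mp h)
  · exact hne' (eq_neg_of_add_eq_zero_left h)

end Bracket

section LineIntersection

variable {α β : ℂ}

lemma lineInt_swap (α β p q : ℂ) : lineInt α β p q = lineInt β α q p := add_comm _ _

lemma lineInt_self (h : brkt α β ≠ 0) (z : ℂ) : lineInt α β z z = z := by
  have h' := brkt_ne_zero_symm h
  unfold lineInt
  rw [brkt_swap α β] at h' ⊢
  field_simp
  unfold brkt
  ring

lemma lineInt_eq_of_brkt_sub_eq_zero (h : brkt α β ≠ 0) {p q z : ℂ} (hp : brkt α (z - p) = 0)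
    (hq : brkt β (z - q) = 0) : lineInt α β p q = z := by
  rw [brkt_sub, sub_eq_zero] at hp hq
  unfold lineInt
  rw [← hp, ← hq]
  exact lineInt_self h z

lemma brkt_lineInt_left (h : brkt α β ≠ 0) (p q : ℂ) :
    brkt α (lineInt α β p q) = brkt α p := by
  unfold lineInt
  rw [brkt_add, brkt_mul_of_conj_eq (conj_brkt_div_brkt _ _ _ _),
    brkt_mul_of_conj_eq (conj_brkt_div_brkt _ _ _ _), brkt_self, mul_zero, add_zero,
    div_mul_cancel₀ _ h]

lemma brkt_lineInt_right (h : brkt α β ≠ 0) (p q : ℂ) :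
    brkt β (lineInt α β p q) = brkt β q := by
  rw [lineInt_swap]
  exact brkt_lineInt_left (brkt_ne_zero_symm h) q p

end LineIntersection

section Construction

variable {U : Set ℂ} {α β : ℂ}

lemma zero_mem_RU : (0 : ℂ) ∈ RU U := Set.mem_iUnion.mpr ⟨0, Or.inl rfl⟩

lemma one_mem_RU : (1 : ℂ) ∈ RU U := Set.mem_iUnion.mpr ⟨0, Or.inr rfl⟩

lemma stepSet_monotone (hα : α ∈ U) (hβ : β ∈ U) (h : brkt α β ≠ 0) : Monotone (stepSet U) :=
  monotone_nat_of_le_succ fun _ z hz =>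
    ⟨α, hα, β, hβ, ne_of_brkt_ne_zero h, ne_neg_of_brkt_ne_zero h, z, hz, z, hz,
      (lineInt_self h z).symm⟩

lemma lineInt_mem_RU (hα : α ∈ U) (hβ : β ∈ U) (h : brkt α β ≠ 0) {p q : ℂ} (hp : p ∈ RU U)
    (hq : q ∈ RU U) : lineInt α β p q ∈ RU U := by
  obtain ⟨m, hm⟩ := Set.mem_iUnion.mp hp
  obtain ⟨n, hn⟩ := Set.mem_iUnion.mp hq
  have hmono := stepSet_monotone hα hβ h
  exact Set.mem_iUnion.mpr ⟨max m n + 1, α, hα, β, hβ, ne_of_brkt_ne_zero h,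
    ne_neg_of_brkt_ne_zero h, p, hmono (le_max_left m n) hm, q, hmono (le_max_right m n) hn, rfl⟩

lemma RU_subset {S : Set ℂ} (h0 : (0 : ℂ) ∈ S) (h1 : (1 : ℂ) ∈ S)
    (hS : ∀ α ∈ U, ∀ β ∈ U, α ≠ β → α ≠ -β → ∀ p ∈ S, ∀ q ∈ S, lineInt α β p q ∈ S) :
    RU U ⊆ S := by
  refine Set.iUnion_subset fun n => ?_
  induction n with
  | zero => rintro z (rfl | rfl) <;> assumption
  | succ n ih =>
    rintro z ⟨α, hα, β, hβ, hne, hne', p, hp, q, hq, rfl⟩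
    exact hS α hα β hβ hne hne' p (ih hp) q (ih hq)

end Construction

section Lattice

lemma mem_span_int_one_pair {R : Type*} [Ring R] {x z : R} :
    z ∈ span ℤ {1, x} ↔ ∃ a b : ℤ, z = a + b * x := by
  simp only [mem_span_pair, zsmul_eq_mul, mul_one, eq_comm]

lemma exists_subring_coe_eq_span_iff {R : Type*} [CommRing R] (x : R) :
    (∃ A : Subring R, (A : Set R) = span ℤ {1, x}) ↔ ∃ lam mu : ℤ, x ^ 2 = lam * x + mu := by
  constructor
  · rintro ⟨A, hA⟩
    have hx : x ∈ A := by
      rw [← SetLike.mem_coe, hA]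
      exact subset_span (by simp)
    have hx2 : x ^ 2 ∈ (span ℤ {1, x} : Set R) := hA ▸ pow_mem hx 2
    obtain ⟨mu, lam, h⟩ := mem_span_int_one_pair.mp hx2
    exact ⟨lam, mu, by rw [h]; ring⟩
  · rintro ⟨lam, mu, hx⟩
    refine ⟨{ (span ℤ {1, x}).toAddSubgroup with
      one_mem' := subset_span (by simp)
      mul_mem' := ?_ }, rfl⟩
    intro p q hp hq
    obtain ⟨a, b, rfl⟩ := mem_span_int_one_pair.mp hp
    obtain ⟨c, d, rfl⟩ := mem_span_int_one_pair.mp hq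
    refine mem_span_int_one_pair.mpr ⟨a * c + b * d * mu, a * d + b * c + b * d * lam, ?_⟩
    push_cast
    linear_combination (b * d : R) * hx

lemma forall_int_pair_of_lattice_ops {T : ℤ → ℤ → Prop} (h00 : T 0 0) (h10 : T 1 0)
    (op1 : ∀ a b c d, T a b → T c d → T c b) (op2 : ∀ a b c d, T a b → T c d → T (c + d - b) b)
    (op3 : ∀ a b c d, T a b → T c d → T a (c + d - a)) (a b : ℤ) : T a b := by
  have h01 : T 0 1 := by simpa using op3 0 0 1 0 h00 h10
  have hrow : ∀ n, T n 0 := by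
    intro n
    induction n using Int.induction_on with
    | zero => exact h00
    | succ n ih => simpa using op2 0 0 n 1 h00 (op1 0 1 n 0 h01 ih)
    | pred n ih => simpa using op1 0 0 _ 1 h00 (op2 0 1 (-n) 0 h01 ih)
  have hcol : T 0 b := by simpa using op3 0 0 b 0 h00 (hrow b)
  exact op1 0 b a 0 hcol (hrow a)

variable {u v x : ℂ}

lemma lineInt_one_u_add_mul (h : brkt 1 u ≠ 0) (hux : brkt u x = 0) (a b c d : ℤ) :
    lineInt 1 u (a + b * x) (c + d * x) = c + b * x := by
  apply lineInt_eq_of_brkt_sub_eq_zero h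
  · exact brkt_eq_zero_of_eq_intCast_mul (brkt_self 1) (c - a) (by push_cast; ring)
  · exact brkt_eq_zero_of_eq_intCast_mul hux (b - d) (by push_cast; ring)

lemma lineInt_one_v_add_mul (h : brkt 1 v ≠ 0) (hvx : brkt v (x - 1) = 0) (a b c d : ℤ) :
    lineInt 1 v (a + b * x) (c + d * x) = ((c + d - b : ℤ) : ℂ) + b * x := by
  apply lineInt_eq_of_brkt_sub_eq_zero h
  · exact brkt_eq_zero_of_eq_intCast_mul (brkt_self 1) (c + d - b - a) (by push_cast; ring)
  · exact brkt_eq_zero_of_eq_intCast_mul hvx (b - d) (by push_cast; ring)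

lemma lineInt_u_v_add_mul (h : brkt u v ≠ 0) (hux : brkt u x = 0) (hvx : brkt v (x - 1) = 0)
    (a b c d : ℤ) : lineInt u v (a + b * x) (c + d * x) = a + ((c + d - a : ℤ) : ℂ) * x := by
  apply lineInt_eq_of_brkt_sub_eq_zero h
  · exact brkt_eq_zero_of_eq_intCast_mul hux (c + d - a - b) (by push_cast; ring)
  · exact brkt_eq_zero_of_eq_intCast_mul hvx (c - a) (by push_cast; ring)

lemma RU_subset_span (hu : ‖u‖ = 1) (hv : ‖v‖ = 1) (hux : brkt u x = 0)
    (hvx : brkt v (x - 1) = 0) : RU {1, u, v} ⊆ span ℤ {1, x} := by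
  refine RU_subset (zero_mem _) (subset_span (by simp)) ?_
  intro α hα β hβ hne hne' p hp q hq
  have hnorm : ∀ γ ∈ ({1, u, v} : Set ℂ), ‖γ‖ = 1 := by simp [hu, hv]
  have hαβ := brkt_ne_zero_of_norm_eq_one (hnorm α hα) (hnorm β hβ) hne hne'
  have hβα := brkt_ne_zero_symm hαβ
  obtain ⟨a, b, rfl⟩ := mem_span_int_one_pair.mp hp
  obtain ⟨c, d, rfl⟩ := mem_span_int_one_pair.mp hq
  rw [SetLike.mem_coe, mem_span_int_one_pair]
  simp only [Set.mem_insert_iff, Set.mem_singleton_iff] at hα hβ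
  rcases hα with rfl | rfl | rfl <;> rcases hβ with rfl | rfl | rfl
  · exact absurd rfl hne
  · exact ⟨c, b, lineInt_one_u_add_mul hαβ hux a b c d⟩
  · exact ⟨c + d - b, b, lineInt_one_v_add_mul hαβ hvx a b c d⟩
  · exact ⟨a, d, by rw [lineInt_swap]; exact lineInt_one_u_add_mul hβα hux c d a b⟩
  · exact absurd rfl hne
  · exact ⟨a, c + d - a, lineInt_u_v_add_mul hαβ hux hvx a b c d⟩
  · exact ⟨a + b - d, d, by rw [lineInt_swap]; exact lineInt_one_v_add_mul hβα hvx c d a b⟩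
  · exact ⟨c, a + b - c, by rw [lineInt_swap]; exact lineInt_u_v_add_mul hβα hux hvx c d a b⟩
  · exact absurd rfl hne

lemma span_subset_RU (h1u : brkt 1 u ≠ 0) (h1v : brkt 1 v ≠ 0) (huv : brkt u v ≠ 0)
    (hux : brkt u x = 0) (hvx : brkt v (x - 1) = 0) :
    (span ℤ {1, x} : Set ℂ) ⊆ RU {1, u, v} := by
  intro z hz
  obtain ⟨a, b, rfl⟩ := mem_span_int_one_pair.mp hz
  refine forall_int_pair_of_lattice_ops (T := fun a b => (a + b * x : ℂ) ∈ RU {1, u, v})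
    (by simpa using zero_mem_RU) (by simpa using one_mem_RU) ?_ ?_ ?_ a b
  · intro a b c d hp hq
    rw [← lineInt_one_u_add_mul h1u hux a b c d]
    exact lineInt_mem_RU (by simp) (by simp) h1u hp hq
  · intro a b c d hp hq
    rw [← lineInt_one_v_add_mul h1v hvx a b c d]
    exact lineInt_mem_RU (by simp) (by simp) h1v hp hq
  · intro a b c d hp hq
    rw [← lineInt_u_v_add_mul huv hux hvx a b c d]
    exact lineInt_mem_RU (by simp) (by simp) huv hp hq

lemma im_ne_zero_of_brkt_eq_zero (hbu : brkt u 1 ≠ 0) (hbv : brkt v 1 ≠ 0)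
    (hux : brkt u x = 0) (hvx : brkt v (x - 1) = 0) : x.im ≠ 0 := by
  intro him
  have hx : conj x = x := conj_eq_iff_im.mpr him
  have hx0 : x = 0 := by
    have h := brkt_mul_of_conj_eq hx u 1
    rw [mul_one, hux] at h
    exact (mul_eq_zero.mp h.symm).resolve_right hbu
  have h := brkt_mul_of_conj_eq (c := -1) (by simp) v 1
  rw [hx0, zero_sub] at hvx
  exact hbv (by simpa [hvx] using h)

end Lattice

/-- for `U = {1, u, v}` with `1, u, v` pairwise non-±-equal and
`x = I_{u,v}(0,1)`, `R(U)` is a subring of `ℂ` iff `x` is a non-real quadratic integer. -/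
theorem stmt7 (u v : ℂ) (hu : ‖u‖ = 1) (hv : ‖v‖ = 1)
    (hu1 : u ≠ 1) (hu1' : u ≠ -1) (hv1 : v ≠ 1) (hv1' : v ≠ -1)
    (huv : u ≠ v) (huv' : u ≠ -v)
    (x : ℂ) (hx : x = lineInt u v 0 1) :
    (∃ A : Subring ℂ, (A : Set ℂ) = RU {1, u, v}) ↔
      (x.im ≠ 0 ∧ ∃ lam mu : ℤ, x ^ 2 = (lam : ℂ) * x + (mu : ℂ)) := by
  have hbu := brkt_ne_zero_of_norm_eq_one hu norm_one hu1 hu1'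
  have hbv := brkt_ne_zero_of_norm_eq_one hv norm_one hv1 hv1'
  have hbuv := brkt_ne_zero_of_norm_eq_one hu hv huv huv'
  have hux : brkt u x = 0 := by rw [hx, brkt_lineInt_left hbuv, brkt_zero]
  have hvx : brkt v (x - 1) = 0 := by rw [brkt_sub, hx, brkt_lineInt_right hbuv, sub_self]
  have hRU : RU {1, u, v} = span ℤ {1, x} :=
    (RU_subset_span hu hv hux hvx).antisymm
      (span_subset_RU (brkt_ne_zero_symm hbu) (brkt_ne_zero_symm hbv) hbuv hux hvx)
  rw [hRU, exists_subring_coe_eq_span_iff]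
  exact ⟨fun h => ⟨im_ne_zero_of_brkt_eq_zero hbu hbv hux hvx, h⟩, And.right⟩
end

section
/- Suppose 1 ∈ U and U contains elements u, v, w such that 1, u, v, w are pairwise non-±-equal. Then every length-two monomial of U, i.e., every point of the form I_{γ,δ}(0, I_{α,β}(0,1)) with α, β, γ, δ ∈ U, α ≠ ±β, γ ≠ ±δ, is a ℤ[P]-linear combination of elementary monomials: it can be written as a finite sum Σᵢ cᵢ·zᵢ with each cᵢ ∈ ℤ[P] and each zᵢ an elementary monomial. -/
open Complex

/- Every length-two monomial `I_{γ,δ}(0,z)`, `z` elementary, is read off one of two identities.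
If `δ ≠ ±1`, then `I_{γ,δ}(0,z) = I_{1,δ}(0,z) · I_{γ,δ}(0,1)`, and `I_{1,δ}(0,z)` is a real length-two
monomial, i.e. an element of `P`. If `δ = ±1`, then `z = I_{γ,1}(0,z) + I_{1,γ}(0,z)` splits `z`
along the directions `γ` and `1`, so `I_{γ,δ}(0,z) = z - I_{1,γ}(0,z) · 1` with `1 = I_{1,γ}(0,1)`
elementary. All the brackets are purely imaginary, so their ratios are real. -/

open ComplexConjugate

lemma conj_brkt_s11 (x y : ℂ) : conj (brkt x y) = -brkt x y := by
  simp only [brkt, map_sub, map_mul, conj_conj]; ring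

lemma brkt_ne_zero {a b : ℂ} (ha : ‖a‖ = 1) (hb : ‖b‖ = 1) (h₁ : a ≠ b) (h₂ : a ≠ -b) :
    brkt a b ≠ 0 := by
  intro h
  have ha' : a * conj a = 1 := by rw [mul_conj', ha]; norm_num
  have hb' : b * conj b = 1 := by rw [mul_conj', hb]; norm_num
  have hsq : (a - b) * (a + b) = 0 := by
    simp only [brkt] at h
    linear_combination a * b * h - a ^ 2 * hb' + b ^ 2 * ha'
  rcases mul_eq_zero.mp hsq with h | h
  · exact h₁ (sub_eq_zero.mp h)
  · exact h₂ (eq_neg_of_add_eq_zero_left h)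

lemma lineInt_zero_left (α β q : ℂ) : lineInt α β 0 q = brkt β q / brkt β α * α := by
  simp [lineInt, brkt]

lemma brkt_neg_left (x y : ℂ) : brkt (-x) y = -brkt x y := by
  simp only [brkt, map_neg]; ring

lemma brkt_neg_right (x y : ℂ) : brkt x (-y) = -brkt x y := by
  simp only [brkt, map_neg]; ring

lemma lineInt_neg_right (α β p q : ℂ) : lineInt α (-β) p q = lineInt α β p q := by
  simp only [lineInt, brkt_neg_left, brkt_neg_right, div_neg, neg_div, neg_neg, neg_mul_neg]

lemma conj_lineInt_one_zero (δ q : ℂ) : conj (lineInt 1 δ 0 q) = lineInt 1 δ 0 q := by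
  rw [lineInt_zero_left, mul_one, map_div₀, conj_brkt_s11, conj_brkt_s11, neg_div_neg_eq]

lemma lineInt_one_zero_one {γ : ℂ} (h : brkt γ 1 ≠ 0) : lineInt 1 γ 0 1 = 1 := by
  rw [lineInt_zero_left, div_self h, one_mul]

lemma lineInt_zero_eq_mul {δ : ℂ} (γ q : ℂ) (h : brkt δ 1 ≠ 0) :
    lineInt γ δ 0 q = lineInt 1 δ 0 q * lineInt γ δ 0 1 := by
  simp only [lineInt_zero_left]
  field_simp

lemma brkt_swap_s11 (x y : ℂ) : brkt x y = -brkt y x := by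
  simp only [brkt]; ring

lemma brkt_mul_sub_brkt_mul (γ δ q : ℂ) : brkt δ q * γ - brkt γ q * δ = brkt δ γ * q := by
  simp only [brkt]; ring

lemma lineInt_zero_add_lineInt_zero {γ δ : ℂ} (q : ℂ) (h : brkt δ γ ≠ 0) :
    lineInt γ δ 0 q + lineInt δ γ 0 q = q := by
  rw [lineInt_zero_left, lineInt_zero_left, brkt_swap_s11 γ δ]
  field_simp
  linear_combination brkt_mul_sub_brkt_mul γ δ q

namespace IsZPComb

variable {U : Set ℂ}

lemma of_isElem {z : ℂ} (hz : IsElem U z) : IsZPComb U z :=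
  ⟨1, fun _ => 1, fun _ => z, fun _ => one_mem _, fun _ => hz, by simp⟩

lemma mul_left {c : ℝ} {m : ℂ} (hc : c ∈ Subring.closure (projSet U)) (hm : IsZPComb U m) :
    IsZPComb U (c * m) := by
  obtain ⟨n, a, z, ha, hz, rfl⟩ := hm
  exact ⟨n, fun i => c * a i, z, fun i => mul_mem hc (ha i), hz, by
    simp only [Finset.mul_sum, ofReal_mul, mul_assoc]⟩

lemma add {m₁ m₂ : ℂ} (h₁ : IsZPComb U m₁) (h₂ : IsZPComb U m₂) : IsZPComb U (m₁ + m₂) := by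
  obtain ⟨n₁, a₁, z₁, ha₁, hz₁, rfl⟩ := h₁
  obtain ⟨n₂, a₂, z₂, ha₂, hz₂, rfl⟩ := h₂
  refine ⟨n₁ + n₂, Fin.append a₁ a₂, Fin.append z₁ z₂, Fin.addCases ?_ ?_, Fin.addCases ?_ ?_, ?_⟩
  all_goals simp_all [Fin.sum_univ_add]

end IsZPComb

section

variable {U : Set ℂ}

lemma exists_mem_projSet_eq_lineInt_one (h1U : (1 : ℂ) ∈ U) {δ z : ℂ} (hδ : δ ∈ U)
    (hδ₁ : δ ≠ 1) (hδ₂ : δ ≠ -1) (hz : IsElem U z) :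
    ∃ ρ ∈ projSet U, (ρ : ℂ) = lineInt 1 δ 0 z := by
  have hre : ((lineInt 1 δ 0 z).re : ℂ) = lineInt 1 δ 0 z :=
    conj_eq_iff_re.mp (conj_lineInt_one_zero δ z)
  refine ⟨(lineInt 1 δ 0 z).re, ⟨1, h1U, δ, hδ, hδ₁.symm, ?_, z, hz, hre⟩, hre⟩
  exact fun h => hδ₂ (by linear_combination h)

lemma isZPComb_lineInt_zero_of_ne_one (hU : ∀ z ∈ U, ‖z‖ = 1) (h1U : (1 : ℂ) ∈ U)
    {γ δ z : ℂ} (hγ : γ ∈ U) (hδ : δ ∈ U) (hγδ : γ ≠ δ) (hγδ' : γ ≠ -δ)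
    (hδ₁ : δ ≠ 1) (hδ₂ : δ ≠ -1) (hz : IsElem U z) : IsZPComb U (lineInt γ δ 0 z) := by
  obtain ⟨ρ, hρ, hρz⟩ := exists_mem_projSet_eq_lineInt_one h1U hδ hδ₁ hδ₂ hz
  rw [lineInt_zero_eq_mul γ z (brkt_ne_zero (hU δ hδ) norm_one hδ₁ hδ₂), ← hρz]
  exact (IsZPComb.of_isElem ⟨γ, hγ, δ, hδ, hγδ, hγδ', rfl⟩).mul_left (Subring.subset_closure hρ)

lemma isZPComb_lineInt_zero_one (hU : ∀ z ∈ U, ‖z‖ = 1) (h1U : (1 : ℂ) ∈ U)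
    {γ z : ℂ} (hγ : γ ∈ U) (hγ₁ : γ ≠ 1) (hγ₂ : γ ≠ -1) (hz : IsElem U z) :
    IsZPComb U (lineInt γ 1 0 z) := by
  obtain ⟨ρ, hρ, hρz⟩ := exists_mem_projSet_eq_lineInt_one h1U hγ hγ₁ hγ₂ hz
  have hγ1 : brkt γ 1 ≠ 0 := brkt_ne_zero (hU γ hγ) norm_one hγ₁ hγ₂
  have h1γ : brkt 1 γ ≠ 0 :=
    brkt_ne_zero norm_one (hU γ hγ) hγ₁.symm (fun h => hγ₂ (by linear_combination h))
  have hsplit : lineInt γ 1 0 z = z + ((-ρ : ℝ) : ℂ) * lineInt 1 γ 0 1 := by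
    rw [lineInt_one_zero_one hγ1, ofReal_neg, hρz]
    linear_combination lineInt_zero_add_lineInt_zero z h1γ
  rw [hsplit]
  refine (IsZPComb.of_isElem hz).add ((IsZPComb.of_isElem ?_).mul_left ?_)
  · exact ⟨1, h1U, γ, hγ, hγ₁.symm, fun h => hγ₂ (by linear_combination h), rfl⟩
  · exact neg_mem (Subring.subset_closure hρ)

end

theorem stmt11_general (U : Set ℂ) (hU : ∀ z ∈ U, ‖z‖ = 1) (h1U : (1 : ℂ) ∈ U)
    (α β γ δ : ℂ) (hα : α ∈ U) (hβ : β ∈ U) (hγ : γ ∈ U) (hδ : δ ∈ U)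
    (hαβ : α ≠ β) (hαβ' : α ≠ -β) (hγδ : γ ≠ δ) (hγδ' : γ ≠ -δ) :
    IsZPComb U (lineInt γ δ 0 (lineInt α β 0 1)) := by
  have hz : IsElem U (lineInt α β 0 1) := ⟨α, hα, β, hβ, hαβ, hαβ', rfl⟩
  by_cases hδ₁ : δ = 1 ∨ δ = -1
  · have hγ₁ : γ ≠ 1 ∧ γ ≠ -1 := by
      rcases hδ₁ with rfl | rfl
      · exact ⟨hγδ, hγδ'⟩
      · exact ⟨by simpa using hγδ', hγδ⟩
    have hline : lineInt γ δ 0 (lineInt α β 0 1) = lineInt γ 1 0 (lineInt α β 0 1) := by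
      rcases hδ₁ with rfl | rfl
      · rfl
      · exact lineInt_neg_right _ _ _ _
    rw [hline]
    exact isZPComb_lineInt_zero_one hU h1U hγ hγ₁.1 hγ₁.2 hz
  · push Not at hδ₁
    exact isZPComb_lineInt_zero_of_ne_one hU h1U hγ hδ hγδ hγδ' hδ₁.1 hδ₁.2 hz

/-- if `1 ∈ U` and `U` contains `u, v, w` with `1, u, v, w` pairwise
non-±-equal, then every length-two monomial `I_{γ,δ}(0, I_{α,β}(0,1))` is a
`ℤ[P]`-linear combination of elementary monomials. -/
theorem stmt11 (U : Set ℂ) (hU : ∀ z ∈ U, ‖z‖ = 1) (h1U : (1 : ℂ) ∈ U)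
    (u v w : ℂ) (hu : u ∈ U) (hv : v ∈ U) (hw : w ∈ U)
    (hu1 : u ≠ 1) (hu1' : u ≠ -1) (hv1 : v ≠ 1) (hv1' : v ≠ -1)
    (hw1 : w ≠ 1) (hw1' : w ≠ -1)
    (huv : u ≠ v) (huv' : u ≠ -v) (huw : u ≠ w) (huw' : u ≠ -w)
    (hvw : v ≠ w) (hvw' : v ≠ -w)
    (α β γ δ : ℂ) (hα : α ∈ U) (hβ : β ∈ U) (hγ : γ ∈ U) (hδ : δ ∈ U)
    (hαβ : α ≠ β) (hαβ' : α ≠ -β) (hγδ : γ ≠ δ) (hγδ' : γ ≠ -δ) :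
    IsZPComb U (lineInt γ δ 0 (lineInt α β 0 1)) :=
  stmt11_general U hU h1U α β γ δ hα hβ hγ hδ hαβ hαβ' hγδ hγδ'
end
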